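/- Let k ≥ 1 be a real number and let τ ∈ ℋ₂ satisfy y₃(τ)² ≤ (1/4)·y₁(τ)·y₂(τ) and k·|y₃(τ)| ≤ y₁(τ). Then for j ∈ {8,9}, |θ_j(τ)/ξ_{8,9}(τ) − 1| ≤ ρ_{8,9}^{(k)}(q₁(τ), q₂(τ)). -/

import Mathlib

open Complex

noncomputable section

/-- 2×2 complex matrices. -/
abbrev Mat2 := Matrix (Fin 2) (Fin 2) ℂ

/-- Membership in the genus-2 Siegel half space: symmetric with
positive definite imaginary part. -/
def inH2 (τ : Mat2) : Prop :=
  τ.IsSymm ∧ (τ.map Complex.im).PosDef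

/-- Genus-2 theta constants with characteristics `a, b ∈ {0,1}²`. -/
def theta (a b : Fin 2 → ℤ) (τ : Mat2) : ℂ :=
  ∑' m : Fin 2 → ℤ,
    Complex.exp ((Real.pi : ℂ) * Complex.I *
      ((∑ i : Fin 2, ∑ j : Fin 2,
          ((m i : ℂ) + (a i : ℂ) / 2) * τ i j * ((m j : ℂ) + (a j : ℂ) / 2)) +
        ∑ i : Fin 2, ((m i : ℂ) + (a i : ℂ) / 2) * ((b i : ℂ) / 2)))

/-- Numbered theta constants: `θ_{(a₀,a₁),(b₀,b₁)} = θ_j` with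
`j = b₀ + 2 b₁ + 4 a₀ + 8 a₁`. -/
def thetaIdx (j : ℕ) (τ : Mat2) : ℂ :=
  theta ![((j / 4 % 2 : ℕ) : ℤ), ((j / 8 % 2 : ℕ) : ℤ)]
    ![((j % 2 : ℕ) : ℤ), ((j / 2 % 2 : ℕ) : ℤ)] τ

def z1 (τ : Mat2) : ℂ := τ 0 0
def z2 (τ : Mat2) : ℂ := τ 1 1
def z3 (τ : Mat2) : ℂ := τ 0 1
def x1 (τ : Mat2) : ℝ := (z1 τ).re
def x2 (τ : Mat2) : ℝ := (z2 τ).re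
def x3 (τ : Mat2) : ℝ := (z3 τ).re
def y1 (τ : Mat2) : ℝ := (z1 τ).im
def y2 (τ : Mat2) : ℝ := (z2 τ).im
def y3 (τ : Mat2) : ℝ := (z3 τ).im
def q1 (τ : Mat2) : ℝ := Real.exp (-Real.pi * y1 τ)
def q2 (τ : Mat2) : ℝ := Real.exp (-Real.pi * y2 τ)

/-- The domain 𝓕′ containing the fundamental domain 𝓕₂. -/
def inF' (τ : Mat2) : Prop :=
  inH2 τ ∧ |x1 τ| ≤ 1/2 ∧ |x2 τ| ≤ 1/2 ∧ |x3 τ| ≤ 1/2 ∧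
    2 * |y3 τ| ≤ y1 τ ∧ y1 τ ≤ y2 τ ∧ Real.sqrt 3 / 2 ≤ y1 τ ∧
    1 ≤ ‖z1 τ‖ ∧ 1 ≤ ‖z2 τ‖

/-- A set of complex numbers is in good position if it is contained in
an open quarter plane. -/
def GoodPosition (s : Set ℂ) : Prop :=
  ∃ u : ℂ, ‖u‖ = 1 ∧ ∀ z ∈ s, 0 < (u * z).re ∧ 0 < (u * z).im

/-- Action of a block matrix `[[A,B],[C,D]]` on the Siegel half space. -/
def actBlocks (A B C D τ : Mat2) : Mat2 := (A * τ + B) * (C * τ + D)⁻¹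

/-- The matrices S₁, S₂, S₃. -/
def Smat : ℕ → Mat2
  | 1 => !![1, 0; 0, 0]
  | 2 => !![0, 0; 0, 1]
  | 3 => !![0, 1; 1, 0]
  | _ => 0

/-- Action of γ_k on ℋ₂, for 0 ≤ k ≤ 3: γ₀ = I₄ and
γ_k = [[−I₂, −S_k],[S_k, −I₂+S_k²]] for k = 1,2,3. -/
def gammaAction (k : ℕ) (τ : Mat2) : Mat2 :=
  if k = 0 then τ
  else actBlocks (-1) (-(Smat k)) (Smat k) (-1 + Smat k ^ 2) τ

/-- τ₁⁽ⁿ⁾ = [[2⁻ⁿz₁, z₃],[z₃, 2ⁿz₂]]. -/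
def tau1n (n : ℕ) (τ : Mat2) : Mat2 :=
  !![((2:ℂ)^n)⁻¹ * z1 τ, z3 τ; z3 τ, (2:ℂ)^n * z2 τ]

/-- τ₂⁽ⁿ⁾ = [[2ⁿz₁, z₃],[z₃, 2⁻ⁿz₂]]. -/
def tau2n (n : ℕ) (τ : Mat2) : Mat2 :=
  !![(2:ℂ)^n * z1 τ, z3 τ; z3 τ, ((2:ℂ)^n)⁻¹ * z2 τ]

/-- τ₄⁽ⁿ⁾ = [[−2ⁿ/z₁, −z₃/z₁],[−z₃/z₁, 2⁻ⁿ(z₂ − z₃²/z₁)]]. -/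
def tau4n (n : ℕ) (τ : Mat2) : Mat2 :=
  !![-(2:ℂ)^n / z1 τ, -z3 τ / z1 τ;
     -z3 τ / z1 τ, ((2:ℂ)^n)⁻¹ * (z2 τ - z3 τ ^ 2 / z1 τ)]

/-- Smallest eigenvalue of Im τ, for a symmetric 2×2 matrix τ. -/
def lambda1 (τ : Mat2) : ℝ :=
  (y1 τ + y2 τ - Real.sqrt ((y1 τ - y2 τ) ^ 2 + 4 * y3 τ ^ 2)) / 2

/-- r(τ) = min{λ₁(τ), y₁(τ)/2, y₂(τ)/2}. -/
def rmin (τ : Mat2) : ℝ := min (lambda1 τ) (min (y1 τ / 2) (y2 τ / 2))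

def xi46 (τ : Mat2) : ℂ := 2 * Complex.exp ((Real.pi : ℂ) * Complex.I * z1 τ / 4)

def xi89 (τ : Mat2) : ℂ := 2 * Complex.exp ((Real.pi : ℂ) * Complex.I * z2 τ / 4)

def xi0 (τ : Mat2) : ℂ :=
  1 + 2 * Complex.exp ((Real.pi : ℂ) * Complex.I * z1 τ) +
    2 * Complex.exp ((Real.pi : ℂ) * Complex.I * z2 τ)

def xi02 (τ : Mat2) : ℂ := 1 + 2 * Complex.exp ((Real.pi : ℂ) * Complex.I * z1 τ)

def xi01 (τ : Mat2) : ℂ := 1 + 2 * Complex.exp ((Real.pi : ℂ) * Complex.I * z2 τ)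

def xi12 (τ : Mat2) : ℂ :=
  Complex.exp ((Real.pi : ℂ) * Complex.I * (z1 τ + z2 τ) / 4) *
    (Complex.exp ((Real.pi : ℂ) * Complex.I * z3 τ / 2) +
      Complex.exp (-((Real.pi : ℂ) * Complex.I * z3 τ / 2)))

/-- ρ_{4,6}^{(k)}(q₁,q₂); here `s` plays the role of q₁ and `t` of q₂. -/
def rho46 (k s t : ℝ) : ℝ :=
  s ^ (2:ℝ) / (1 - s ^ (4:ℝ)) + t ^ (1 - 1/k) / (1 - t ^ (3 - 1/k)) +
    t ^ (1 + 1/k) / (1 - t ^ (3 + 1/k)) +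
    s ^ ((7:ℝ)/8) * t ^ ((1:ℝ)/2) / ((1 - t ^ ((3:ℝ)/2)) * (1 - s ^ (2:ℝ))) +
    s ^ ((25:ℝ)/8) * t ^ ((3:ℝ)/2) / ((1 - t ^ ((9:ℝ)/2)) * (1 - s ^ (6:ℝ)))

/-- ρ_{8,9}^{(k)}(q₁,q₂); here `s` plays the role of q₁ and `t` of q₂. -/
def rho89 (k s t : ℝ) : ℝ :=
  t ^ (2:ℝ) / (1 - t ^ (4:ℝ)) + s ^ (1 - 1/k) / (1 - s ^ (3 - 1/k)) +
    s ^ (1 + 1/k) / (1 - s ^ (3 + 1/k)) +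
    t ^ ((7:ℝ)/8) * s ^ ((1:ℝ)/2) / ((1 - s ^ ((3:ℝ)/2)) * (1 - t ^ (2:ℝ))) +
    t ^ ((25:ℝ)/8) * s ^ ((3:ℝ)/2) / ((1 - s ^ ((9:ℝ)/2)) * (1 - t ^ (6:ℝ)))

/-- ρ₀(q₁,q₂). -/
def rho0 (s t : ℝ) : ℝ :=
  2 * s ^ (4:ℝ) / (1 - s ^ (5:ℝ)) + 2 * t ^ (4:ℝ) / (1 - t ^ (5:ℝ)) +
    2 * s ^ ((1:ℝ)/2) * t ^ ((1:ℝ)/2) / ((1 - s ^ ((3:ℝ)/2)) * (1 - t ^ ((3:ℝ)/2))) +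
    2 * s ^ ((3:ℝ)/2) * t ^ ((3:ℝ)/2) / ((1 - s ^ ((9:ℝ)/2)) * (1 - t ^ ((9:ℝ)/2)))

/-- ρ₁₂(q₁,q₂). -/
def rho12 (s t : ℝ) : ℝ :=
  s ^ ((3:ℝ)/2) / (1 - s ^ ((7:ℝ)/2)) + s ^ ((5:ℝ)/2) / (1 - s ^ ((9:ℝ)/2)) +
    t ^ ((3:ℝ)/2) / (1 - t ^ ((7:ℝ)/2)) + t ^ ((5:ℝ)/2) / (1 - t ^ ((9:ℝ)/2)) +
    s ^ ((7:ℝ)/8) * t ^ ((7:ℝ)/8) / ((1 - s ^ (2:ℝ)) * (1 - t ^ (2:ℝ))) +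
    s ^ ((25:ℝ)/8) * t ^ ((25:ℝ)/8) / ((1 - s ^ (6:ℝ)) * (1 - t ^ (6:ℝ)))

/-- α = √(3/7). -/
def alph : ℝ := Real.sqrt (3/7)

/-- ρ'_{0,1}^{(k)}(q₁,q₂); here `s` plays the role of q₁ and `t` of q₂. -/
def rho01' (k s t : ℝ) : ℝ :=
  2 * t ^ (4:ℝ) / (1 - t ^ (5:ℝ)) + 2 * s / (1 - s ^ (3:ℝ)) +
    2 * s ^ (1 - 2/k) * t / (1 - s ^ (3 - 2/k)) +
    2 * s ^ (1 + 2/k) * t / (1 - s ^ (3 + 2/k)) +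
    2 * s ^ (1 - alph) * t ^ (4 * (1 - alph)) /
      ((1 - s ^ (3 * (1 - alph))) * (1 - t ^ (5 * (1 - alph)))) +
    2 * s ^ (1 + alph) * t ^ (4 * (1 + alph)) /
      ((1 - s ^ (3 * (1 + alph))) * (1 - t ^ (5 * (1 + alph))))

/-- ρ'_{8,9}^{(k)}(q₁,q₂); here `s` plays the role of q₁ and `t` of q₂. -/
def rho89' (k s t : ℝ) : ℝ :=
  t ^ (2:ℝ) / (1 - t ^ (4:ℝ)) + s ^ (1 - 1/k) / (1 - s ^ (3 - 1/k)) +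
    s ^ (1 + 1/k) / (1 - s ^ (3 + 1/k)) +
    t ^ (2 - (9/4) * alph) * s ^ (1 - alph) /
      ((1 - t ^ (4 * (1 - alph))) * (1 - s ^ (3 * (1 - alph)))) +
    t ^ (2 + (9/4) * alph) * s ^ (1 + alph) /
      ((1 - t ^ (4 * (1 + alph))) * (1 - s ^ (3 * (1 + alph))))

/-! `θ₈` and `θ₉` have characteristics `a = (0, 1)`, `b = (b₀, 0)`. Their terms are indexed by
`(m, ν) ∈ ℤ × (ℤ + 1/2)` and have modulus `exp (-π Q(m, ν))`, where `Q` is the quadratic form of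
`Im τ`, and `ξ_{8,9}` is the sum of the two terms `(0, ±1/2)`; so `|θ/ξ - 1|` is at most the sum of
the moduli of the other terms divided by `|ξ|`. Group the terms in pairs `(m, ±ν)`; since
`Q(-m, ν) = Q(m, -ν)`, the rows `m` and `-m` contribute equally. For a pair, convexity of `exp`
gives `e^{-x} + e^{-y} ≤ e^{-μ} + e^{-(x + y - μ)}` whenever `μ ≤ x, y`, and
`x + y = 2(y₁m² + y₂ν²)` no longer involves `y₃`. Take `μ = y₁(m² - m/k) + y₂/4` on the central
pair `ν = 1/2` (using `k|y₃| ≤ y₁`) and `μ = (y₁m² + y₂ν²)/2` on the others (using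
`4y₃² ≤ y₁y₂`). Each bound is a product of powers of `q₁` and `q₂` whose exponents grow at least
linearly in the summation index, so geometric series give the five terms of `ρ_{8,9}^{(k)}`. -/

open scoped Real

namespace Real

lemma exp_add_exp_le_exp_add_exp_sub {x y M : ℝ} (hx : x ≤ M) (hy : y ≤ M) :
    rexp x + rexp y ≤ rexp M + rexp (x + y - M) := by
  have hxy : rexp (x + y - M) * rexp M = rexp x * rexp y := by
    rw [← Real.exp_add, ← Real.exp_add]; ring_nf
  have hfactor : 0 ≤ (rexp M - rexp x) * (rexp M - rexp y) :=
    mul_nonneg (sub_nonneg.2 (exp_le_exp.2 hx)) (sub_nonneg.2 (exp_le_exp.2 hy))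
  nlinarith [exp_pos M]

lemma summable_exp_neg_mul_add_sq {c : ℝ} (hc : 0 < c) (β : ℝ) :
    Summable fun n : ℤ ↦ rexp (-c * (n + β) ^ 2) := by
  have hθ := (summable_jacobiTheta₂_term_iff ((c * β / π : ℝ) * Complex.I)
    ((c / π : ℝ) * Complex.I)).2 (by simpa using div_pos hc pi_pos)
  refine (hθ.norm.mul_left (rexp (-c * β ^ 2))).congr fun n ↦ ?_
  rw [norm_jacobiTheta₂_term, ← Real.exp_add]
  congr 1
  simp only [Complex.mul_im, Complex.ofReal_re, Complex.ofReal_im, Complex.I_re, Complex.I_im]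
  field_simp
  ring

end Real

section LinearExponent

variable {q c d : ℝ} {e : ℕ → ℝ}

lemma rpow_le_mul_pow_of_linear_le (hq0 : 0 < q) (hq1 : q ≤ 1) (he : ∀ i, c + d * i ≤ e i)
    (i : ℕ) : q ^ e i ≤ q ^ c * (q ^ d) ^ i := by
  rw [← Real.rpow_natCast, ← Real.rpow_mul hq0.le, ← Real.rpow_add hq0]
  exact Real.rpow_le_rpow_of_exponent_ge hq0 hq1 (he i)

lemma exists_hasSum_rpow_le_of_linear_le (hq0 : 0 < q) (hq1 : q < 1) (hd : 0 < d)
    (he : ∀ i, c + d * i ≤ e i) :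
    ∃ S, HasSum (fun i ↦ q ^ e i) S ∧ S ≤ q ^ c / (1 - q ^ d) := by
  have hgeom := (hasSum_geometric_of_lt_one (by positivity)
    (Real.rpow_lt_one hq0.le hq1 hd)).mul_left (q ^ c)
  have hle := rpow_le_mul_pow_of_linear_le hq0 hq1.le he
  have hsum := hgeom.summable.of_nonneg_of_le (fun _ ↦ by positivity) hle
  exact ⟨_, hsum.hasSum, hasSum_le hle hsum.hasSum hgeom⟩

end LinearExponent

lemma natCast_le_sq (i : ℕ) : (i : ℝ) ≤ (i : ℝ) ^ 2 := by
  exact_mod_cast Nat.le_self_pow two_ne_zero i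

def quadForm (A B C x y : ℝ) : ℝ := A * x ^ 2 + 2 * C * x * y + B * y ^ 2

def thetaWeight (A B C x y : ℝ) : ℝ := rexp (-π * quadForm A B C x y)

def rowWeight (A B C x : ℝ) : ℝ :=
  ∑' j : ℕ, (thetaWeight A B C x (j + 1 / 2) + thetaWeight A B C x (-(j + 1 / 2)))

section ThetaWeight

variable {k A B C : ℝ}

lemma quadForm_neg_left (x y : ℝ) : quadForm A B C (-x) y = quadForm A B C x (-y) := by
  unfold quadForm; ring

lemma quadForm_add_quadForm_neg (x y : ℝ) :
    quadForm A B C x y + quadForm A B C x (-y) = A * (2 * x ^ 2) + B * (2 * y ^ 2) := by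
  unfold quadForm; ring

lemma half_le_quadForm (hA : 0 < A) (hB : 0 < B) (hC : C ^ 2 ≤ 1 / 4 * A * B) (x y : ℝ) :
    A * (x ^ 2 / 2) + B * (y ^ 2 / 2) ≤ quadForm A B C x y := by
  unfold quadForm
  nlinarith [sq_nonneg (A * x ^ 2 - B * y ^ 2), sq_nonneg (x * y),
    sq_nonneg (A * x ^ 2 + B * y ^ 2 + 4 * C * x * y),
    mul_nonneg (mul_nonneg (sq_nonneg x) hA.le) (mul_nonneg (sq_nonneg y) hB.le),
    mul_nonneg (sq_nonneg x) hA.le, mul_nonneg (sq_nonneg y) hB.le]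

lemma exp_neg_pi_mul_lt_one (hA : 0 < A) : rexp (-π * A) < 1 :=
  Real.exp_lt_one_iff.2 (by nlinarith [Real.pi_pos])

lemma exp_neg_pi_mul_add (u v : ℝ) :
    rexp (-π * (A * u + B * v)) = rexp (-π * A) ^ u * rexp (-π * B) ^ v := by
  rw [← Real.exp_mul, ← Real.exp_mul, ← Real.exp_add]; ring_nf

lemma thetaWeight_nonneg (x y : ℝ) : 0 ≤ thetaWeight A B C x y := (Real.exp_pos _).le

lemma thetaWeight_le (hA : 0 < A) (hB : 0 < B) (hC : C ^ 2 ≤ 1 / 4 * A * B) (x y : ℝ) :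
    thetaWeight A B C x y ≤ rexp (-(π * A / 2) * x ^ 2) * rexp (-(π * B / 2) * y ^ 2) := by
  rw [thetaWeight, ← Real.exp_add]
  have := half_le_quadForm hA hB hC x y
  exact Real.exp_le_exp.2 (by nlinarith [Real.pi_pos])

lemma summable_thetaWeight (hA : 0 < A) (hB : 0 < B) (hC : C ^ 2 ≤ 1 / 4 * A * B) :
    Summable fun p : ℤ × ℤ ↦ thetaWeight A B C p.1 (p.2 + 1 / 2) := by
  have hA' : 0 < π * A / 2 := by positivity
  have hB' : 0 < π * B / 2 := by positivity
  refine Summable.of_nonneg_of_le (fun _ ↦ thetaWeight_nonneg _ _)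
    (fun p ↦ thetaWeight_le hA hB hC _ _) ?_
  simpa using (Real.summable_exp_neg_mul_add_sq hA' 0).mul_of_nonneg
    (Real.summable_exp_neg_mul_add_sq hB' (1 / 2)) (fun _ ↦ (Real.exp_pos _).le)
    (fun _ ↦ (Real.exp_pos _).le)

lemma thetaWeight_pair_le {x y u v u' v' : ℝ}
    (hu : u + u' = 2 * x ^ 2) (hv : v + v' = 2 * y ^ 2)
    (hpos : A * u + B * v ≤ quadForm A B C x y) (hneg : A * u + B * v ≤ quadForm A B C x (-y)) :
    thetaWeight A B C x y + thetaWeight A B C x (-y) ≤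
      rexp (-π * A) ^ u * rexp (-π * B) ^ v + rexp (-π * A) ^ u' * rexp (-π * B) ^ v' := by
  have hsum : A * u' + B * v' = quadForm A B C x y + quadForm A B C x (-y) - (A * u + B * v) := by
    rw [quadForm_add_quadForm_neg, ← hu, ← hv]; ring
  rw [thetaWeight, thetaWeight, ← exp_neg_pi_mul_add, ← exp_neg_pi_mul_add, hsum]
  convert Real.exp_add_exp_le_exp_add_exp_sub (M := -π * (A * u + B * v))
    (mul_le_mul_of_nonpos_left hpos (by linarith [Real.pi_pos]))
    (mul_le_mul_of_nonpos_left hneg (by linarith [Real.pi_pos])) using 2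
  congr 1
  ring

lemma thetaWeight_zero_left (y : ℝ) : thetaWeight A B C 0 y = rexp (-π * B) ^ (y ^ 2) := by
  rw [thetaWeight, ← Real.exp_mul, quadForm]; ring_nf

lemma thetaWeight_pair_half_le (hk : 0 < k) (h2 : k * |C| ≤ A) {x : ℝ} (hx : 0 ≤ x) :
    thetaWeight A B C x (1 / 2) + thetaWeight A B C x (-(1 / 2)) ≤
      rexp (-π * A) ^ (x ^ 2 - x / k) * rexp (-π * B) ^ (1 / 4 : ℝ) +
        rexp (-π * A) ^ (x ^ 2 + x / k) * rexp (-π * B) ^ (1 / 4 : ℝ) := by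
  have hCA : x * |C| ≤ A * (x / k) := by
    rw [mul_div_assoc', le_div_iff₀ hk]; nlinarith
  apply thetaWeight_pair_le (by ring) (by ring) <;> unfold quadForm <;>
    nlinarith [neg_abs_le C, le_abs_self C]

lemma thetaWeight_pair_le_of_sq_le (hA : 0 < A) (hB : 0 < B) (hC : C ^ 2 ≤ 1 / 4 * A * B)
    (x y : ℝ) :
    thetaWeight A B C x y + thetaWeight A B C x (-y) ≤
      rexp (-π * A) ^ (x ^ 2 / 2) * rexp (-π * B) ^ (y ^ 2 / 2) +
        rexp (-π * A) ^ (3 * x ^ 2 / 2) * rexp (-π * B) ^ (3 * y ^ 2 / 2) :=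
  thetaWeight_pair_le (by ring) (by ring) (half_le_quadForm hA hB hC x y)
    (by simpa using half_le_quadForm hA hB hC x (-y))

lemma rowWeight_nonneg (x : ℝ) : 0 ≤ rowWeight A B C x :=
  tsum_nonneg fun _ ↦ add_nonneg (thetaWeight_nonneg _ _) (thetaWeight_nonneg _ _)

lemma rowWeight_neg (x : ℝ) : rowWeight A B C (-x) = rowWeight A B C x := by
  unfold rowWeight thetaWeight
  refine tsum_congr fun j ↦ ?_
  rw [quadForm_neg_left, quadForm_neg_left, neg_neg, add_comm]

lemma rowWeight_zero_le (hB : 0 < B) :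
    rowWeight A B C 0 ≤ 2 * rexp (-π * B) ^ (1 / 4 : ℝ) +
      2 * (rexp (-π * B) ^ (9 / 4 : ℝ) / (1 - rexp (-π * B) ^ (4 : ℝ))) := by
  set t := rexp (-π * B)
  have ht0 : 0 < t := Real.exp_pos _
  have ht1 : t < 1 := exp_neg_pi_mul_lt_one hB
  have hrow : ∀ j : ℕ, thetaWeight A B C 0 (j + 1 / 2) + thetaWeight A B C 0 (-(j + 1 / 2)) =
      2 * t ^ (((j : ℝ) + 1 / 2) ^ 2) := fun j ↦ by
    rw [thetaWeight_zero_left, thetaWeight_zero_left, neg_sq]; ring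
  obtain ⟨S, hS, hS_le⟩ := exists_hasSum_rpow_le_of_linear_le ht0 ht1 (c := 9 / 4) (d := 4)
    (e := fun j ↦ (((j + 1 : ℕ) : ℝ) + 1 / 2) ^ 2) (by norm_num) fun j ↦ by
      push_cast; nlinarith [natCast_le_sq j]
  rw [rowWeight, tsum_congr hrow,
    tsum_eq_zero_add' (f := fun j : ℕ ↦ 2 * t ^ (((j : ℝ) + 1 / 2) ^ 2)) (hS.mul_left 2).summable,
    (hS.mul_left 2).tsum_eq, Nat.cast_zero, zero_add, show ((1 : ℝ) / 2) ^ 2 = 1 / 4 by norm_num]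
  linarith

lemma rowWeight_le (hk : 0 < k) (hA : 0 < A) (hB : 0 < B) (hC : C ^ 2 ≤ 1 / 4 * A * B)
    (h2 : k * |C| ≤ A) {x : ℝ} (hx : 0 ≤ x) :
    rowWeight A B C x ≤
      rexp (-π * A) ^ (x ^ 2 - x / k) * rexp (-π * B) ^ (1 / 4 : ℝ) +
        rexp (-π * A) ^ (x ^ 2 + x / k) * rexp (-π * B) ^ (1 / 4 : ℝ) +
        rexp (-π * A) ^ (x ^ 2 / 2) *
          (rexp (-π * B) ^ (9 / 8 : ℝ) / (1 - rexp (-π * B) ^ (2 : ℝ))) +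
        rexp (-π * A) ^ (3 * x ^ 2 / 2) *
          (rexp (-π * B) ^ (27 / 8 : ℝ) / (1 - rexp (-π * B) ^ (6 : ℝ))) := by
  have hcentral := thetaWeight_pair_half_le (B := B) hk h2 hx
  set s := rexp (-π * A)
  set t := rexp (-π * B)
  have ht0 : 0 < t := Real.exp_pos _
  have ht1 : t < 1 := exp_neg_pi_mul_lt_one hB
  set y : ℕ → ℝ := fun j ↦ ((j + 1 : ℕ) : ℝ) + 1 / 2
  obtain ⟨S₁, hS₁, h₁⟩ := exists_hasSum_rpow_le_of_linear_le ht0 ht1 (c := 9 / 8) (d := 2)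
    (e := fun j ↦ y j ^ 2 / 2) (by norm_num) fun j ↦ by
      simp only [y]; push_cast; nlinarith [natCast_le_sq j]
  obtain ⟨S₃, hS₃, h₃⟩ := exists_hasSum_rpow_le_of_linear_le ht0 ht1 (c := 27 / 8) (d := 6)
    (e := fun j ↦ 3 * y j ^ 2 / 2) (by norm_num) fun j ↦ by
      simp only [y]; push_cast; nlinarith [natCast_le_sq j]
  have hbound := (hS₁.mul_left (s ^ (x ^ 2 / 2))).add (hS₃.mul_left (s ^ (3 * x ^ 2 / 2)))
  have htail : ∀ j : ℕ, thetaWeight A B C x (y j) + thetaWeight A B C x (-y j) ≤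
      s ^ (x ^ 2 / 2) * t ^ (y j ^ 2 / 2) + s ^ (3 * x ^ 2 / 2) * t ^ (3 * y j ^ 2 / 2) :=
    fun j ↦ thetaWeight_pair_le_of_sq_le hA hB hC x (y j)
  have htail_sum := hbound.summable.of_nonneg_of_le
    (fun _ ↦ add_nonneg (thetaWeight_nonneg _ _) (thetaWeight_nonneg _ _)) htail
  rw [rowWeight, tsum_eq_zero_add' (f := fun j : ℕ ↦
      thetaWeight A B C x (j + 1 / 2) + thetaWeight A B C x (-(j + 1 / 2))) htail_sum,
    Nat.cast_zero, zero_add]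
  calc _ ≤ _ + (s ^ (x ^ 2 / 2) * S₁ + s ^ (3 * x ^ 2 / 2) * S₃) :=
        add_le_add hcentral (hasSum_le htail htail_sum.hasSum hbound)
    _ ≤ _ := by rw [← add_assoc]; gcongr

lemma tsum_rowWeight_succ_le (hk : 1 ≤ k) (hA : 0 < A) (hB : 0 < B)
    (hC : C ^ 2 ≤ 1 / 4 * A * B) (h2 : k * |C| ≤ A) :
    ∑' i : ℕ, rowWeight A B C (i + 1) ≤
      rexp (-π * B) ^ (1 / 4 : ℝ) * (rho89 k (rexp (-π * A)) (rexp (-π * B)) -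
        rexp (-π * B) ^ (2 : ℝ) / (1 - rexp (-π * B) ^ (4 : ℝ))) := by
  have hk0 : 0 < k := by linarith
  have hrow : ∀ i : ℕ, rowWeight A B C (i + 1) ≤ _ := fun i ↦
    rowWeight_le hk0 hA hB hC h2 (x := (i : ℝ) + 1) (by positivity)
  set s := rexp (-π * A)
  set t := rexp (-π * B)
  have hs0 : 0 < s := Real.exp_pos _
  have hs1 : s < 1 := exp_neg_pi_mul_lt_one hA
  have ht0 : 0 < t := Real.exp_pos _
  have ht1 : t < 1 := exp_neg_pi_mul_lt_one hB
  have hkinv : 1 / k ≤ 1 := by rw [div_le_one hk0]; exact hk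
  have hdiv (i : ℕ) : ((i : ℝ) + 1) / k = 1 / k * i + 1 / k := by ring
  obtain ⟨S₁, hS₁, h₁⟩ := exists_hasSum_rpow_le_of_linear_le hs0 hs1 (c := 1 - 1 / k)
    (d := 3 - 1 / k) (e := fun i ↦ ((i : ℝ) + 1) ^ 2 - (i + 1) / k) (by linarith) fun i ↦ by
      rw [hdiv]; nlinarith [natCast_le_sq i]
  obtain ⟨S₂, hS₂, h₂⟩ := exists_hasSum_rpow_le_of_linear_le hs0 hs1 (c := 1 + 1 / k)
    (d := 3 + 1 / k) (e := fun i ↦ ((i : ℝ) + 1) ^ 2 + (i + 1) / k) (by positivity) fun i ↦ by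
      rw [hdiv]; nlinarith [natCast_le_sq i]
  obtain ⟨S₃, hS₃, h₃⟩ := exists_hasSum_rpow_le_of_linear_le hs0 hs1 (c := 1 / 2) (d := 3 / 2)
    (e := fun i ↦ ((i : ℝ) + 1) ^ 2 / 2) (by norm_num) fun i ↦ by nlinarith [natCast_le_sq i]
  obtain ⟨S₄, hS₄, h₄⟩ := exists_hasSum_rpow_le_of_linear_le hs0 hs1 (c := 3 / 2) (d := 9 / 2)
    (e := fun i ↦ 3 * ((i : ℝ) + 1) ^ 2 / 2) (by norm_num) fun i ↦ by nlinarith [natCast_le_sq i]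
  have hbound := (((hS₁.mul_right (t ^ (1 / 4 : ℝ))).add (hS₂.mul_right (t ^ (1 / 4 : ℝ)))).add
    (hS₃.mul_right (t ^ (9 / 8 : ℝ) / (1 - t ^ (2 : ℝ))))).add
    (hS₄.mul_right (t ^ (27 / 8 : ℝ) / (1 - t ^ (6 : ℝ))))
  have hsum := hbound.summable.of_nonneg_of_le (fun _ ↦ rowWeight_nonneg _) hrow
  have ht2 : 0 < 1 - t ^ (2 : ℝ) := sub_pos.2 (Real.rpow_lt_one ht0.le ht1 (by norm_num))
  have ht6 : 0 < 1 - t ^ (6 : ℝ) := sub_pos.2 (Real.rpow_lt_one ht0.le ht1 (by norm_num))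
  have ht98 : t ^ (9 / 8 : ℝ) = t ^ (1 / 4 : ℝ) * t ^ (7 / 8 : ℝ) := by
    rw [← Real.rpow_add ht0]; norm_num
  have ht278 : t ^ (27 / 8 : ℝ) = t ^ (1 / 4 : ℝ) * t ^ (25 / 8 : ℝ) := by
    rw [← Real.rpow_add ht0]; norm_num
  calc _ ≤ _ := hasSum_le hrow hsum.hasSum hbound
    _ ≤ s ^ (1 - 1 / k) / (1 - s ^ (3 - 1 / k)) * t ^ (1 / 4 : ℝ) +
        s ^ (1 + 1 / k) / (1 - s ^ (3 + 1 / k)) * t ^ (1 / 4 : ℝ) +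
        s ^ (1 / 2 : ℝ) / (1 - s ^ (3 / 2 : ℝ)) * (t ^ (9 / 8 : ℝ) / (1 - t ^ (2 : ℝ))) +
        s ^ (3 / 2 : ℝ) / (1 - s ^ (9 / 2 : ℝ)) * (t ^ (27 / 8 : ℝ) / (1 - t ^ (6 : ℝ))) := by
      gcongr
    _ = _ := by rw [rho89, ht98, ht278]; simp only [div_eq_mul_inv, mul_inv]; ring

lemma tsum_thetaWeight_eq_rowWeight
    (hsum : Summable fun p : ℤ × ℤ ↦ thetaWeight A B C p.1 (p.2 + 1 / 2)) :
    ∑' p : ℤ × ℤ, thetaWeight A B C p.1 (p.2 + 1 / 2) =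
      rowWeight A B C 0 + 2 * ∑' i : ℕ, rowWeight A B C (i + 1) := by
  have hrow : ∀ m : ℤ, ∑' n : ℤ, thetaWeight A B C m (n + 1 / 2) = rowWeight A B C m := by
    intro m
    rw [← tsum_nat_add_neg_add_one (hsum.prod_factor m), rowWeight]
    refine tsum_congr fun j ↦ congrArg₂ (· + ·) rfl (congrArg _ ?_)
    push_cast; ring
  have hR : Summable fun m : ℤ ↦ rowWeight A B C m := hsum.prod.congr hrow
  have hsucc : Summable fun i : ℕ ↦ rowWeight A B C ((i : ℤ) + 1 : ℤ) :=
    hR.comp_injective fun a b h ↦ by simpa using h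
  have hneg : Summable fun i : ℕ ↦ rowWeight A B C (-((i : ℤ) + 1) : ℤ) := by
    simpa only [Int.cast_neg, rowWeight_neg] using hsucc
  rw [hsum.tsum_prod, tsum_congr hrow,
    tsum_of_add_one_of_neg_add_one (f := fun m : ℤ ↦ rowWeight A B C m) hsucc hneg]
  simp only [Int.cast_neg, rowWeight_neg, Int.cast_add, Int.cast_natCast, Int.cast_one,
    Int.cast_zero]
  ring

lemma tsum_thetaWeight_le (hk : 1 ≤ k) (hA : 0 < A) (hB : 0 < B)
    (hC : C ^ 2 ≤ 1 / 4 * A * B) (h2 : k * |C| ≤ A) :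
    ∑' p : ℤ × ℤ, thetaWeight A B C p.1 (p.2 + 1 / 2) ≤
      2 * rexp (-π * B) ^ (1 / 4 : ℝ) * (1 + rho89 k (rexp (-π * A)) (rexp (-π * B))) := by
  have h0 := rowWeight_zero_le (A := A) (C := C) hB
  have h1 := tsum_rowWeight_succ_le hk hA hB hC h2
  have ht94 : rexp (-π * B) ^ (9 / 4 : ℝ) =
      rexp (-π * B) ^ (1 / 4 : ℝ) * rexp (-π * B) ^ (2 : ℝ) := by
    rw [← Real.rpow_add (Real.exp_pos _)]; norm_num
  rw [ht94, mul_div_assoc] at h0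
  rw [tsum_thetaWeight_eq_rowWeight (summable_thetaWeight hA hB hC)]
  linarith

end ThetaWeight

def thetaTerm (a b : Fin 2 → ℤ) (τ : Mat2) (m : Fin 2 → ℤ) : ℂ :=
  cexp (π * I * ((∑ i : Fin 2, ∑ j : Fin 2,
      ((m i : ℂ) + (a i : ℂ) / 2) * τ i j * ((m j : ℂ) + (a j : ℂ) / 2)) +
    ∑ i : Fin 2, ((m i : ℂ) + (a i : ℂ) / 2) * ((b i : ℂ) / 2)))

lemma theta_eq_tsum_thetaTerm (a b : Fin 2 → ℤ) (τ : Mat2) :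
    theta a b τ = ∑' m, thetaTerm a b τ m := rfl

lemma norm_thetaTerm (a b : Fin 2 → ℤ) (τ : Mat2) (m : Fin 2 → ℤ) :
    ‖thetaTerm a b τ m‖ = rexp (-π * ∑ i : Fin 2, ∑ j : Fin 2,
      ((m i : ℝ) + a i / 2) * (τ i j).im * ((m j : ℝ) + a j / 2)) := by
  have hx : ∀ i, (m i : ℂ) + (a i : ℂ) / 2 = (((m i : ℝ) + a i / 2 : ℝ) : ℂ) := fun i ↦ by
    push_cast; rfl
  rw [thetaTerm, norm_exp]
  simp only [hx]
  simp [Complex.mul_re, Complex.mul_im]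

lemma inH2.y1_pos {τ : Mat2} (hτ : inH2 τ) : 0 < y1 τ := hτ.2.diag_pos (i := 0)

lemma inH2.y2_pos {τ : Mat2} (hτ : inH2 τ) : 0 < y2 τ := hτ.2.diag_pos (i := 1)

lemma norm_thetaTerm_eq_thetaWeight {τ : Mat2} (hτ : inH2 τ) (b : Fin 2 → ℤ) (m : Fin 2 → ℤ) :
    ‖thetaTerm ![0, 1] b τ m‖ = thetaWeight (y1 τ) (y2 τ) (y3 τ) (m 0) (m 1 + 1 / 2) := by
  have hsymm : τ 1 0 = τ 0 1 := hτ.1.apply 0 1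
  rw [norm_thetaTerm, thetaWeight, quadForm, y1, y2, y3, z1, z2, z3]
  congr 2
  simp only [Fin.sum_univ_two, Matrix.cons_val_zero, Matrix.cons_val_one, Matrix.cons_val_fin_one,
    Int.cast_zero, Int.cast_one, hsymm]
  ring

lemma norm_tsum_sub_sum_le {ι E : Type*} [NormedAddCommGroup E] [CompleteSpace E] {f : ι → E}
    (hf : Summable fun i ↦ ‖f i‖) (s : Finset ι) :
    ‖∑' i, f i - ∑ i ∈ s, f i‖ ≤ ∑' i, ‖f i‖ - ∑ i ∈ s, ‖f i‖ := by
  rw [← hf.of_norm.sum_add_tsum_compl (s := s), ← hf.sum_add_tsum_compl (s := s),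
    add_sub_cancel_left, add_sub_cancel_left]
  exact norm_tsum_le_tsum_norm (hf.subtype _)

lemma xi89_eq_sum_thetaTerm (τ : Mat2) (b₀ : ℤ) :
    xi89 τ = ∑ m ∈ {![0, 0], ![0, -1]}, thetaTerm ![0, 1] ![b₀, 0] τ m := by
  rw [Finset.sum_pair (by decide), xi89, two_mul]
  congr 1 <;>
  · simp only [thetaTerm, Fin.sum_univ_two, Matrix.cons_val_zero, Matrix.cons_val_one,
      Matrix.cons_val_fin_one, Int.cast_zero, Int.cast_neg, Int.cast_one, z2]
    congr 1
    ring

lemma norm_xi89 (τ : Mat2) : ‖xi89 τ‖ = 2 * q2 τ ^ (1 / 4 : ℝ) := by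
  rw [xi89, norm_mul, Complex.norm_two, Complex.norm_exp, q2, ← Real.exp_mul]
  congr 2
  simp only [mul_re, div_ofNat_re, ofReal_re, ofReal_im, I_re, I_im, mul_zero, mul_one, sub_self,
    zero_mul, mul_im, add_zero, zero_sub, y2]
  ring

theorem norm_theta_div_xi89_sub_one_le {k : ℝ} (hk : 1 ≤ k) {τ : Mat2} (hτ : inH2 τ)
    (h1 : y3 τ ^ 2 ≤ 1 / 4 * y1 τ * y2 τ) (h2 : k * |y3 τ| ≤ y1 τ) (b₀ : ℤ) :
    ‖theta ![0, 1] ![b₀, 0] τ / xi89 τ - 1‖ ≤ rho89 k (q1 τ) (q2 τ) := by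
  set f := thetaTerm ![0, 1] ![b₀, 0] τ
  have hnorm : (fun m ↦ ‖f m‖) = fun m : Fin 2 → ℤ ↦
      thetaWeight (y1 τ) (y2 τ) (y3 τ) (m 0) (m 1 + 1 / 2) :=
    funext (norm_thetaTerm_eq_thetaWeight hτ _)
  have hsum : Summable fun m ↦ ‖f m‖ := by
    rw [hnorm, ← (finTwoArrowEquiv ℤ).symm.summable_iff]
    exact summable_thetaWeight hτ.y1_pos hτ.y2_pos h1
  have htsum : ∑' m, ‖f m‖ ≤ 2 * q2 τ ^ (1 / 4 : ℝ) * (1 + rho89 k (q1 τ) (q2 τ)) := by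
    rw [hnorm, ← (finTwoArrowEquiv ℤ).symm.tsum_eq]
    exact tsum_thetaWeight_le hk hτ.y1_pos hτ.y2_pos h1 h2
  have hS : ∑ m ∈ {![0, 0], ![0, -1]}, ‖f m‖ = 2 * q2 τ ^ (1 / 4 : ℝ) := by
    rw [Finset.sum_pair (by decide), norm_thetaTerm_eq_thetaWeight hτ,
      norm_thetaTerm_eq_thetaWeight hτ]
    simp only [Matrix.cons_val_zero, Matrix.cons_val_one, Matrix.cons_val_fin_one, Int.cast_zero,
      Int.cast_neg, Int.cast_one, thetaWeight_zero_left]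
    norm_num [q2]
    ring
  have hξ : 0 < ‖xi89 τ‖ := by rw [norm_xi89, q2]; positivity
  rw [div_sub_one (norm_pos_iff.1 hξ), norm_div, div_le_iff₀ hξ, theta_eq_tsum_thetaTerm,
    xi89_eq_sum_thetaTerm τ b₀]
  calc _ ≤ ∑' m, ‖f m‖ - ∑ m ∈ {![0, 0], ![0, -1]}, ‖f m‖ := norm_tsum_sub_sum_le hsum _
    _ ≤ rho89 k (q1 τ) (q2 τ) * (2 * q2 τ ^ (1 / 4 : ℝ)) := by rw [hS]; linarith
    _ = _ := by rw [← xi89_eq_sum_thetaTerm, norm_xi89]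

/-- Estimate on θ₈ and θ₉. -/
theorem stmt_8 (k : ℝ) (hk : 1 ≤ k) (τ : Mat2) (hτ : inH2 τ)
    (h1 : y3 τ ^ 2 ≤ 1/4 * y1 τ * y2 τ) (h2 : k * |y3 τ| ≤ y1 τ) :
    ∀ j ∈ ({8, 9} : Set ℕ),
      ‖thetaIdx j τ / xi89 τ - 1‖ ≤ rho89 k (q1 τ) (q2 τ) := by
  -- `thetaIdx 8` and `thetaIdx 9` unfold to the characteristics `(0, 1), (b₀, 0)`, `b₀ = 0, 1`.
  rintro j (rfl | rfl)
  · exact norm_theta_div_xi89_sub_one_le hk hτ h1 h2 0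
  · exact norm_theta_div_xi89_sub_one_le hk hτ h1 h2 1
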